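/- Fix ν ≥ 0 and set p = 2/(2+ν), q = 1 − p. For every ε ∈ (0,1]: ∑_{x=1}^∞ p q^{x−1} (1 − (h_ε(0))^x) = ε, where h_ε(0) = 1 − ε·(1 + (ν/2)(1−ε))^{−1}. -/
import Mathlib


open Filter Finset

/-- The linear fractional generating function `h_a(s)` (with parameter ν). -/
noncomputable def h (ν a s : ℝ) : ℝ :=
  if s = 1 then 1 else 1 - a * (1/(1-s) + ν/2 * (1-a))⁻¹

theorem stmt7 (ν : ℝ) (hν : 0 ≤ ν) (p q : ℝ) (hp : p = 2/(2+ν)) (hq : q = 1 - p)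
    (ε : ℝ) (hε : ε ∈ Set.Ioc (0 : ℝ) 1) :
    HasSum (fun x : ℕ => p * q ^ x * (1 - (h ν ε 0) ^ (x+1))) ε := by
  obtain ⟨hε0, hε1⟩ := hε
  have h2ν : (0:ℝ) < 2 + ν := by linarith
  set c := h ν ε 0 with hcdef
  have hD : (0:ℝ) < 1 + ν/2 * (1-ε) := by nlinarith
  have hc : c = 1 - ε / (1 + ν/2 * (1-ε)) := by
    simp [hcdef, h, div_eq_mul_inv]
  have hc0 : 0 ≤ c := by
    rw [hc, sub_nonneg, div_le_one hD]; nlinarith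
  have hc1 : c < 1 := by
    rw [hc, sub_lt_self_iff]
    exact div_pos hε0 hD
  have hq0 : 0 ≤ q := by
    rw [hq, hp, sub_nonneg, div_le_one h2ν]; linarith
  have hq1 : q < 1 := by
    rw [hq, hp, sub_lt_self_iff]
    positivity
  have hqc0 : 0 ≤ q * c := mul_nonneg hq0 hc0
  have hqc1 : q * c < 1 :=
    lt_of_le_of_lt (mul_le_of_le_one_right hq0 hc1.le) hq1
  have h1 : HasSum (fun x : ℕ => p * q ^ x) (p * (1 - q)⁻¹) :=
    (hasSum_geometric_of_lt_one hq0 hq1).mul_left p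
  have h2 : HasSum (fun x : ℕ => (p * c) * (q * c) ^ x) ((p * c) * (1 - q * c)⁻¹) :=
    (hasSum_geometric_of_lt_one hqc0 hqc1).mul_left (p * c)
  have h3 := h1.sub h2
  have heq : (fun x : ℕ => p * q ^ x - (p * c) * (q * c) ^ x)
      = fun x : ℕ => p * q ^ x * (1 - c ^ (x + 1)) := by
    funext x
    rw [mul_pow, pow_succ]
    ring
  rw [heq] at h3
  have hval : p * (1 - q)⁻¹ - (p * c) * (1 - q * c)⁻¹ = ε := by
    have hD' : (1 + ν/2 * (1-ε)) ≠ 0 := ne_of_gt hD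
    have hp0 : p ≠ 0 := by rw [hp]; positivity
    have e1 : p * (1 - q)⁻¹ = 1 := by
      rw [hq, sub_sub_cancel, mul_inv_cancel₀ hp0]
    have hppoly : p * (2 + ν) = 2 := by
      rw [hp, div_mul_cancel₀]; exact h2ν.ne'
    have key : (1 + ν/2 * (1-ε))⁻¹ * (1 + ν/2 * (1-ε)) = 1 := inv_mul_cancel₀ hD'
    have hcpoly : c * (2 + ν - ν*ε) = 2 + ν - ν*ε - 2*ε := by
      rw [hc]; linear_combination (-2*ε) * key
    have hqc1' : (1 : ℝ) - q * c ≠ 0 := by linarith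
    have hM : ((2:ℝ) + ν) * (2 + ν - ν*ε) ≠ 0 := by
      have h1 : (0:ℝ) < 2 + ν - ν*ε := by nlinarith
      exact (mul_pos h2ν h1).ne'
    have e3mul : (p * c) * ((2 + ν) * (2 + ν - ν*ε))
        = (1 - ε) * (1 - q * c) * ((2 + ν) * (2 + ν - ν*ε)) := by
      rw [hq]
      linear_combination (ε*c*(2+ν-ν*ε)) * hppoly + (2*ε+(1-ε)*(2+ν)) * hcpoly
    have e3' : p * c = (1 - ε) * (1 - q * c) := mul_right_cancel₀ hM e3mul
    have e3 : (p * c) * (1 - q * c)⁻¹ = 1 - ε := by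
      rw [e3', mul_assoc, mul_inv_cancel₀ hqc1', mul_one]
    rw [e1, e3]; ring
  rwa [hval] at h3
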